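/- tr(A R B (R − I)) = (tr(AR) − tr(A)/2)(tr(BR) − tr(B)/2) + (1/2)tr([A,B]R) − (1/2)tr(AB) + tr(A)tr(B)/4. -/
import Mathlib

/-- Polarized Cayley–Hamilton identity for `2×2` matrices. -/
lemma polCH (X Y : Matrix (Fin 2) (Fin 2) ℂ) :
    X * Y + Y * X
      = X.trace • Y + Y.trace • X
        + ((X * Y).trace - X.trace * Y.trace) • (1 : Matrix (Fin 2) (Fin 2) ℂ) := by
  ext i j
  fin_cases i <;> fin_cases j <;>
    simp [Matrix.mul_apply, Fin.sum_univ_two, Matrix.trace_fin_two, Matrix.one_apply] <;>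
    ring

/-- For `2×2` matrices `A, B` with `det A = det B = 0` and an idempotent `R`
with `tr R = 1`:
`tr(A R B (R − I)) = (tr(AR) − tr A/2)(tr(BR) − tr B/2) + (1/2)tr([A,B]R)
− (1/2)tr(AB) + tr A · tr B / 4`. -/
theorem trace_A_R_B_Rsub (A B R : Matrix (Fin 2) (Fin 2) ℂ)
    (hA : A.det = 0) (hB : B.det = 0) (hR : R * R = R) (htrR : R.trace = 1) :
    (A * R * B * (R - 1)).trace
      = ((A * R).trace - A.trace / 2) * ((B * R).trace - B.trace / 2)
        + (1 / 2) * ((A * B - B * A) * R).trace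
        - (1 / 2) * (A * B).trace
        + A.trace * B.trace / 4 := by
  have hBR : B * R
      = B.trace • R + B + ((R * B).trace - B.trace) • (1 : Matrix (Fin 2) (Fin 2) ℂ)
        - R * B := by
    have h := polCH R B
    rw [htrR] at h
    simp only [one_smul, one_mul] at h
    have : B * R = (R * B + B * R) - R * B := by abel
    rw [this, h]; abel
  have h1 : A * R * B * R = (B * R).trace • (A * R) := by
    calc A * R * B * R = A * R * (B * R) := by rw [mul_assoc]
      _ = A * R * (B.trace • R + B + ((R * B).trace - B.trace) • 1 - R * B) := by
          rw [hBR]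
      _ = B.trace • (A * R * R) + A * R * B
            + ((R * B).trace - B.trace) • (A * R * 1) - A * R * (R * B) := by
          rw [mul_sub, mul_add, mul_add, Matrix.mul_smul, Matrix.mul_smul]
      _ = B.trace • (A * R) + A * R * B
            + ((R * B).trace - B.trace) • (A * R) - A * R * B := by
          rw [mul_assoc A R R, hR, mul_one, mul_assoc A R (R * B), ← mul_assoc R R B, hR,
            ← mul_assoc A R B]
      _ = (B.trace + ((R * B).trace - B.trace)) • (A * R) := by
          rw [add_smul]; abel
      _ = (B * R).trace • (A * R) := by rw [Matrix.trace_mul_comm R B]; ring_nf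
  have h1t : (A * R * B * R).trace = (B * R).trace * (A * R).trace := by
    rw [h1, Matrix.trace_smul]; rfl
  have h2 : ((A * B + B * A) * R).trace
      = A.trace * (B * R).trace + B.trace * (A * R).trace
        + ((A * B).trace - A.trace * B.trace) := by
    rw [polCH A B, add_mul, add_mul, Matrix.smul_mul, Matrix.smul_mul, Matrix.smul_mul,
      one_mul, Matrix.trace_add, Matrix.trace_add, Matrix.trace_smul, Matrix.trace_smul,
      Matrix.trace_smul, htrR]
    simp only [smul_eq_mul, mul_one]
  have h3 : (A * R * B).trace = (B * A * R).trace := by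
    rw [Matrix.trace_mul_comm, ← mul_assoc]
  have hexp : (A * R * B * (R - 1)).trace
      = (A * R * B * R).trace - (A * R * B).trace := by
    rw [mul_sub, mul_one, Matrix.trace_sub]
  have h2' : ((A * B + B * A) * R).trace = ((A * B) * R).trace + ((B * A) * R).trace := by
    rw [add_mul, Matrix.trace_add]
  have h4 : ((A * B - B * A) * R).trace = ((A * B) * R).trace - ((B * A) * R).trace := by
    rw [sub_mul, Matrix.trace_sub]
  rw [hexp, h1t, h3, h4]
  linear_combination (1/2 : ℂ) * h2' - (1/2 : ℂ) * h2
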